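/- arXiv:2407.06749 — 2 statements merged into one kernel-verified Lean document; each statement's English description precedes it below -/
import Mathlib

section
/- For every integer K ≥ 1 and all indices i, j with i ≠ j, the K-step transition matrix P^K satisfies (P^K)_{ii} > (P^K)_{ij}. Consequently, for the symmetric Markov source with p > q, given that the last successfully received status update (generated K slots ago) is state i, the unique maximizer over states x of the conditional probability Pr(X(t) = x | X(t-K) = i) = (P^K)_{i,x} is x = i; i.e., the maximum-likelihood estimate of the source state at the sink is the last successfully received status update. -/
/-- Transition matrix of the symmetric `N`-state Markov source:
diagonal entries `p`, off-diagonal entries `q`. -/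
def srcMatrix (N : ℕ) (p q : ℝ) : Matrix (Fin N) (Fin N) ℝ :=
  fun i j => if i = j then p else q

private lemma srcMatrix_eq (N : ℕ) (p q : ℝ) :
    srcMatrix N p q =
      q • (Matrix.of fun _ _ => (1:ℝ)) + (p - q) • (1 : Matrix (Fin N) (Fin N) ℝ) := by
  ext i j
  by_cases h : i = j <;>
    simp [srcMatrix, Matrix.one_apply, h] <;> ring

private lemma ones_mul_ones (N : ℕ) :
    (Matrix.of fun _ _ => (1:ℝ)) * (Matrix.of fun _ _ => (1:ℝ)) =
      (N : ℝ) • (Matrix.of fun _ _ => (1:ℝ) : Matrix (Fin N) (Fin N) ℝ) := by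
  ext i j
  simp [Matrix.mul_apply]

private lemma key (N : ℕ) (p q : ℝ) (K : ℕ) :
    ∃ c : ℝ, srcMatrix N p q ^ K =
      c • (Matrix.of fun _ _ => (1:ℝ)) + (p - q) ^ K • (1 : Matrix (Fin N) (Fin N) ℝ) := by
  induction K with
  | zero => exact ⟨0, by simp⟩
  | succ K ih =>
    obtain ⟨c, hc⟩ := ih
    refine ⟨c * q * N + c * (p - q) + (p - q) ^ K * q, ?_⟩
    rw [pow_succ, hc, srcMatrix_eq]
    set J : Matrix (Fin N) (Fin N) ℝ := Matrix.of fun _ _ => (1:ℝ) with hJ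
    have hJJ : J * J = (N : ℝ) • J := ones_mul_ones N
    rw [add_mul, mul_add, mul_add]
    rw [Matrix.smul_mul, Matrix.smul_mul, Matrix.smul_mul, Matrix.smul_mul,
      Matrix.mul_smul, Matrix.mul_smul, Matrix.mul_smul, Matrix.mul_smul, hJJ]
    simp only [Matrix.mul_one, Matrix.one_mul, smul_smul]
    rw [pow_succ]
    module

/-- For the symmetric Markov source with `p > q`, after any number `K ≥ 1` of
transitions, `(P^K)_{ii} > (P^K)_{ij}` for every `i ≠ j`; consequently, given
that the last successfully received status update (generated `K` slots ago) is
state `i`, the unique maximizer over states `x` of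
`Pr(X(t) = x | X(t-K) = i) = (P^K)_{i,x}` is `x = i`, i.e. the ML estimate of
the source state at the sink is the last successfully received update. -/
theorem stmt1 (N : ℕ) (hN : 2 ≤ N) (p q : ℝ) (hp0 : 0 ≤ p) (hp1 : p ≤ 1)
    (hq : q = (1 - p) / ((N : ℝ) - 1)) (hpq : q < p)
    (K : ℕ) (hK : 1 ≤ K) (i : Fin N) :
    (∀ j : Fin N, i ≠ j → (srcMatrix N p q ^ K) i j < (srcMatrix N p q ^ K) i i) ∧
    (∀ x : Fin N, x ≠ i → (srcMatrix N p q ^ K) i x < (srcMatrix N p q ^ K) i i) := by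
  obtain ⟨c, hc⟩ := key N p q K
  have hd : (0:ℝ) < (p - q) ^ K := pow_pos (by linarith) K
  have h : ∀ j : Fin N, i ≠ j → (srcMatrix N p q ^ K) i j < (srcMatrix N p q ^ K) i i := by
    intro j hij
    rw [hc]
    simp [Matrix.add_apply, Matrix.smul_apply, Matrix.one_apply, hij, hd]
  exact ⟨h, fun x hx => h x (Ne.symm hx)⟩
end

section
/- For every integer K ≥ 1 and all indices i ≠ j, the K-step transition matrix satisfies the closed form (P^K)_{ii} − (P^K)_{ij} = (p − q)^K. -/
lemma srcMatrix_gap (N : ℕ) (p q : ℝ) (i j : Fin N) (hij : i ≠ j) :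
    ∀ m : ℕ, (srcMatrix N p q ^ (m + 1)) i i - (srcMatrix N p q ^ (m + 1)) i j
      = (p - q) ^ (m + 1) := by
  intro m
  induction m with
  | zero => simp [srcMatrix, hij]
  | succ n ih =>
    have key : ∀ k : Fin N,
        srcMatrix N p q k i - srcMatrix N p q k j
          = (if k = i then (p - q) else 0) + (if k = j then (q - p) else 0) := by
      intro k
      by_cases hki : k = i <;> by_cases hkj : k = j <;>
        simp_all [srcMatrix, sub_eq_iff_eq_add]
    rw [pow_succ, Matrix.mul_apply, Matrix.mul_apply]
    rw [← Finset.sum_sub_distrib]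
    have : ∀ k ∈ Finset.univ,
        (srcMatrix N p q ^ (n + 1)) i k * srcMatrix N p q k i
          - (srcMatrix N p q ^ (n + 1)) i k * srcMatrix N p q k j
        = (srcMatrix N p q ^ (n + 1)) i k
            * ((if k = i then (p - q) else 0) + (if k = j then (q - p) else 0)) := by
      intro k _
      rw [← mul_sub, key k]
    rw [Finset.sum_congr rfl this]
    simp only [mul_add, Finset.sum_add_distrib, mul_ite, mul_zero]
    rw [Finset.sum_ite_eq' Finset.univ i, Finset.sum_ite_eq' Finset.univ j]
    simp only [Finset.mem_univ, if_true]
    have : (srcMatrix N p q ^ (n + 1)) i i * (p - q)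
        + (srcMatrix N p q ^ (n + 1)) i j * (q - p)
        = ((srcMatrix N p q ^ (n + 1)) i i - (srcMatrix N p q ^ (n + 1)) i j) * (p - q) := by
      ring
    rw [this, ih, ← pow_succ]

/-- Closed form for the gap between diagonal and off-diagonal entries of the
`K`-step transition matrix: `(P^K)_{ii} - (P^K)_{ij} = (p - q)^K` for `i ≠ j`. -/
theorem stmt7 (N : ℕ) (hN : 2 ≤ N) (p q : ℝ)
    (hq : q = (1 - p) / ((N : ℝ) - 1))
    (K : ℕ) (hK : 1 ≤ K) (i j : Fin N) (hij : i ≠ j) :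
    (srcMatrix N p q ^ K) i i - (srcMatrix N p q ^ K) i j = (p - q) ^ K := by
  obtain ⟨m, rfl⟩ := Nat.exists_eq_add_of_le hK
  rw [Nat.add_comm 1 m]
  exact srcMatrix_gap N p q i j hij m
end
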